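/- arXiv:1501.07806 — 5 statements merged into one kernel-verified Lean document; each statement's English description precedes it below -/
import Mathlib

section
/- With H(d) the expected hitting time of the simple random walk on {0,1}^N to a fixed vertex from Hamming distance d, for every fixed α in (0,1], the ratio H(⌊αN⌋)/2^N converges to 1 as N → ∞. -/
/-!
Write `H(d) = ∑_{k<d} A_k / C(N-1, k)` with `A_k = 1 + ∑_{k<i<N} C(N, i) ≤ 2^N`. The term
`k = 0` is `2^N - 1`, which gives the lower bound, and the term `k = 1` is at most
`2^N / (N-1)`. For `2 ≤ k ≤ (N-1)/2` the denominator is at least `C(N-1, 2) ≥ N²/8`, and for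
`k ≥ N/2` the binomials in `A_k` decrease, so `A_k ≤ (N-k) C(N, k+1) ≤ 2N C(N-1, k)`. Summing,
for `1 ≤ d ≤ N`, `2^N - 1 ≤ H(d) ≤ 2^N (1 + 10/N) + 2N²`.
-/

/-- Expected hitting time of the simple random walk on the `N`-hypercube to a
fixed target vertex, starting from Hamming distance `d` (closed form). -/
noncomputable def hittingTimeH (N d : ℕ) : ℝ :=
  ∑ d' ∈ Finset.range d,
    (1 + ∑ j ∈ Finset.Icc 1 (N - 1 - d'), (N.choose (d' + j) : ℝ)) /
      ((N - 1).choose d' : ℝ)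

open Finset Filter

namespace Nat

theorem choose_le_choose_of_two_mul_le {n a b : ℕ} (hab : a ≤ b) (hb : 2 * b ≤ n) :
    n.choose a ≤ n.choose b := by
  induction b, hab using Nat.le_induction with
  | base => rfl
  | succ b _ ih => exact (ih (by omega)).trans (choose_le_succ_of_lt_half_left (by omega))

theorem choose_le_choose_of_le_two_mul {n a b : ℕ} (hab : a ≤ b) (hb : b ≤ n)
    (ha : n ≤ 2 * a) :
    n.choose b ≤ n.choose a := by
  rw [← choose_symm hb, ← choose_symm (hab.trans hb)]
  exact choose_le_choose_of_two_mul_le (by omega) (by omega)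

theorem sum_range_choose_add_one (n : ℕ) : ∑ i ∈ range n, n.choose i + 1 = 2 ^ n := by
  simpa [sum_range_succ] using sum_range_choose n

theorem sq_div_eight_le_choose_sub_one_two {N : ℕ} (hN : 4 ≤ N) :
    (N : ℝ) ^ 2 / 8 ≤ (N - 1).choose 2 := by
  have hN' : (4 : ℝ) ≤ N := by exact_mod_cast hN
  rw [cast_choose_two, cast_sub (by omega : 1 ≤ N), cast_one]
  nlinarith

end Nat

def hittingNumerator (N k : ℕ) : ℕ := 1 + ∑ i ∈ Ioo k N, N.choose i

noncomputable def hittingTerm (N k : ℕ) : ℝ := hittingNumerator N k / (N - 1).choose k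

theorem hittingTimeH_eq_sum_hittingTerm (N d : ℕ) :
    hittingTimeH N d = ∑ k ∈ range d, hittingTerm N k := by
  refine sum_congr rfl fun k _ => ?_
  have hIoo : (Icc 1 (N - 1 - k)).map (addLeftEmbedding k) = Ioo k N := by
    rw [map_add_left_Icc]; ext i; simp only [mem_Icc, mem_Ioo]; omega
  rw [hittingTerm, hittingNumerator, ← hIoo, sum_map]
  push_cast
  rfl

theorem hittingTerm_nonneg (N k : ℕ) : 0 ≤ hittingTerm N k := by
  unfold hittingTerm; positivity

theorem hittingNumerator_le_two_pow (N k : ℕ) : hittingNumerator N k ≤ 2 ^ N := by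
  have hsub : Ioo k N ⊆ range N := fun i hi => by simp only [mem_Ioo, mem_range] at hi ⊢; omega
  have := sum_le_sum_of_subset (f := N.choose) hsub
  have := Nat.sum_range_choose_add_one N
  unfold hittingNumerator; omega

theorem hittingNumerator_zero {N : ℕ} (hN : 1 ≤ N) : hittingNumerator N 0 + 1 = 2 ^ N := by
  have hsplit : ∑ i ∈ range N, N.choose i = 1 + ∑ i ∈ Ioo 0 N, N.choose i := by
    rw [range_eq_Ico, sum_eq_sum_Ico_succ_bot hN, Ico_add_one_left_eq_Ioo, Nat.choose_zero_right]
  have := Nat.sum_range_choose_add_one N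
  unfold hittingNumerator; omega

theorem hittingNumerator_le_of_le_two_mul {N k : ℕ} (hk : N ≤ 2 * k) (hkN : k < N) :
    hittingNumerator N k ≤ 2 * N * (N - 1).choose k := by
  have htail : ∑ i ∈ Ioo k N, N.choose i ≤ (N - k - 1) * N.choose (k + 1) := by
    simpa [Nat.card_Ioo] using sum_le_card_nsmul (Ioo k N) N.choose (N.choose (k + 1))
      fun i hi => Nat.choose_le_choose_of_le_two_mul (by simp at hi; omega) (by simp at hi; omega)
        (by omega)
  have hpos : 0 < N.choose (k + 1) := Nat.choose_pos hkN
  have hpascal : N * (N - 1).choose k = N.choose (k + 1) * (k + 1) := by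
    simpa [Nat.sub_add_cancel (by omega : 1 ≤ N)] using Nat.add_one_mul_choose_eq (N - 1) k
  calc hittingNumerator N k ≤ (N - k) * N.choose (k + 1) := by
        have : (N - k) * N.choose (k + 1) = (N - k - 1) * N.choose (k + 1) + N.choose (k + 1) := by
          rw [← Nat.succ_mul]; congr 1; omega
        unfold hittingNumerator; omega
    _ ≤ 2 * (k + 1) * N.choose (k + 1) := Nat.mul_le_mul_right _ (by omega)
    _ = 2 * N * (N - 1).choose k := by rw [mul_assoc 2 N, hpascal]; ring

theorem hittingTerm_le_two_pow_div (N k : ℕ) : hittingTerm N k ≤ 2 ^ N / (N - 1).choose k :=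
  div_le_div_of_nonneg_right (by exact_mod_cast hittingNumerator_le_two_pow N k) (by positivity)

theorem hittingTerm_le_of_le_two_mul {N k : ℕ} (hk : N ≤ 2 * k) (hkN : k < N) :
    hittingTerm N k ≤ 2 * N := by
  have hpos : (0 : ℝ) < (N - 1).choose k := by exact_mod_cast Nat.choose_pos (by omega)
  rw [hittingTerm, div_le_iff₀ hpos]
  exact_mod_cast hittingNumerator_le_of_le_two_mul hk hkN

theorem hittingTerm_one_le {N : ℕ} (hN : 2 ≤ N) : hittingTerm N 1 ≤ 2 ^ N / (N / 2) := by
  refine (hittingTerm_le_two_pow_div N 1).trans (div_le_div_of_nonneg_left (by positivity)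
    (by positivity) ?_)
  have : (2 : ℝ) ≤ N := by exact_mod_cast hN
  rw [Nat.choose_one_right, Nat.cast_sub (by omega : 1 ≤ N)]
  push_cast; linarith

theorem hittingTerm_le_of_two_le {N k : ℕ} (hN : 4 ≤ N) (hk : 2 ≤ k) (hkN : k < N) :
    hittingTerm N k ≤ 2 ^ N / (N ^ 2 / 8) + 2 * N := by
  rcases le_or_gt (2 * k) (N - 1) with hlow | hhigh
  · have hchoose : ((N - 1).choose 2 : ℝ) ≤ (N - 1).choose k := by
      exact_mod_cast Nat.choose_le_choose_of_two_mul_le hk hlow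
    have hbound : hittingTerm N k ≤ 2 ^ N / (N ^ 2 / 8) :=
      (hittingTerm_le_two_pow_div N k).trans (div_le_div_of_nonneg_left (by positivity)
        (by positivity) ((Nat.sq_div_eight_le_choose_sub_one_two hN).trans hchoose))
    linarith [show (0 : ℝ) ≤ 2 * N by positivity]
  · have := hittingTerm_le_of_le_two_mul (by omega : N ≤ 2 * k) hkN
    linarith [show (0 : ℝ) ≤ 2 ^ N / (N ^ 2 / 8) by positivity]

theorem hittingTimeH_mono (N : ℕ) : Monotone (hittingTimeH N) := fun _ _ hd => by
  simp only [hittingTimeH_eq_sum_hittingTerm]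
  exact sum_le_sum_of_subset_of_nonneg (range_subset_range.mpr hd)
    fun k _ _ => hittingTerm_nonneg N k

theorem hittingTimeH_self_le {N : ℕ} (hN : 4 ≤ N) :
    hittingTimeH N N ≤ 2 ^ N * (1 + 10 / N) + 2 * N ^ 2 := by
  have hsplit : hittingTimeH N N
      = hittingTerm N 0 + (hittingTerm N 1 + ∑ k ∈ Ico 2 N, hittingTerm N k) := by
    rw [hittingTimeH_eq_sum_hittingTerm, range_eq_Ico, sum_eq_sum_Ico_succ_bot (by omega),
      sum_eq_sum_Ico_succ_bot (by omega)]
  have h0 : hittingTerm N 0 ≤ 2 ^ N := by simpa using hittingTerm_le_two_pow_div N 0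
  have hrest : ∑ k ∈ Ico 2 N, hittingTerm N k ≤ N * (2 ^ N / (N ^ 2 / 8) + 2 * N) := by
    refine (sum_le_card_nsmul _ _ _ fun k hk => hittingTerm_le_of_two_le hN
      (mem_Ico.mp hk).1 (mem_Ico.mp hk).2).trans ?_
    rw [Nat.card_Ico, nsmul_eq_mul]
    gcongr
    exact_mod_cast Nat.sub_le N 2
  have hNpos : (0 : ℝ) < N := by positivity
  calc hittingTimeH N N ≤ 2 ^ N + (2 ^ N / (N / 2) + N * (2 ^ N / (N ^ 2 / 8) + 2 * N)) := by
        rw [hsplit]; gcongr; exact hittingTerm_one_le (by omega)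
    _ = _ := by field_simp; ring

theorem one_sub_inv_two_pow_le_hittingTimeH_div {N d : ℕ} (hN : 1 ≤ N) (hd : 1 ≤ d) :
    1 - (2 ^ N : ℝ)⁻¹ ≤ hittingTimeH N d / 2 ^ N := by
  have h0 : (2 : ℝ) ^ N - 1 ≤ hittingTerm N 0 := by
    have hcast : (hittingNumerator N 0 : ℝ) + 1 = 2 ^ N := by
      exact_mod_cast hittingNumerator_zero hN
    rw [hittingTerm, Nat.choose_zero_right, Nat.cast_one, div_one]
    linarith
  have hH : (2 : ℝ) ^ N - 1 ≤ hittingTimeH N d :=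
    h0.trans (by simpa [hittingTimeH_eq_sum_hittingTerm] using hittingTimeH_mono N hd)
  rw [le_div_iff₀ (by positivity), sub_mul, inv_mul_cancel₀ (by positivity), one_mul]
  exact hH

theorem hittingTimeH_div_le {N d : ℕ} (hN : 4 ≤ N) (hd : d ≤ N) :
    hittingTimeH N d / 2 ^ N ≤ 1 + 10 / N + 2 * (N ^ 2 / 2 ^ N) := by
  rw [div_le_iff₀ (by positivity)]
  calc hittingTimeH N d ≤ 2 ^ N * (1 + 10 / N) + 2 * N ^ 2 :=
        (hittingTimeH_mono N hd).trans (hittingTimeH_self_le hN)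
    _ = _ := by field_simp

/-- For every fixed `α ∈ (0,1]`, `H(⌊αN⌋)/2^N → 1` as `N → ∞`. -/
theorem stmt_5 (α : ℝ) (hα : α ∈ Set.Ioc (0 : ℝ) 1) :
    Filter.Tendsto (fun N : ℕ => hittingTimeH N ⌊α * N⌋₊ / 2 ^ N)
      Filter.atTop (nhds 1) := by
  obtain ⟨hα0, hα1⟩ := hα
  have hfloor : ∀ᶠ N : ℕ in atTop, 4 ≤ N ∧ 1 ≤ ⌊α * N⌋₊ ∧ ⌊α * N⌋₊ ≤ N := by
    filter_upwards [eventually_ge_atTop 4,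
      (tendsto_natCast_atTop_atTop.const_mul_atTop hα0).eventually_ge_atTop 1] with N hN h1
    refine ⟨hN, Nat.one_le_floor_iff _ |>.mpr h1, Nat.floor_le_of_le ?_⟩
    nlinarith [(Nat.cast_nonneg N : (0 : ℝ) ≤ N)]
  have hlower : Tendsto (fun N : ℕ => 1 - (2 ^ N : ℝ)⁻¹) atTop (nhds 1) := by
    simpa using tendsto_const_nhds.sub
      (tendsto_inv_atTop_zero.comp (tendsto_pow_atTop_atTop_of_one_lt (one_lt_two : (1 : ℝ) < 2)))
  have hupper : Tendsto (fun N : ℕ => 1 + 10 / (N : ℝ) + 2 * (N ^ 2 / 2 ^ N)) atTop (nhds 1) := by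
    simpa using (tendsto_const_nhds.add (tendsto_const_div_atTop_nhds_zero_nat 10)).add
      ((tendsto_pow_const_div_const_pow_of_one_lt 2 one_lt_two).const_mul 2)
  refine tendsto_of_tendsto_of_tendsto_of_le_of_le' hlower hupper ?_ ?_
  · filter_upwards [hfloor] with N hN
    exact one_sub_inv_two_pow_le_hittingTimeH_div (by omega) hN.2.1
  · filter_upwards [hfloor] with N hN
    exact hittingTimeH_div_le hN.1 hN.2.2
end

section
/- The hitting-time function H(d) of the simple random walk on the hypercube is increasing and concave: for all 1 ≤ d ≤ N-1, H(d) - H(d-1) ≥ H(d+1) - H(d) > 0. -/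
open Finset

def tailChoose (N d : ℕ) : ℕ := ∑ j ∈ Icc 1 (N - d), N.choose (d + j)

theorem Nat.choose_succ_mul_choose_le {N a b : ℕ} (hab : a < b) :
    N.choose (b + 1) * (N - 1).choose a ≤ N.choose b * (N - 1).choose (a + 1) := by
  have hN := Nat.choose_succ_right_eq N b
  have hN' := Nat.choose_succ_right_eq (N - 1) a
  have hratio : (N - b) * (a + 1) ≤ (N - 1 - a) * (b + 1) :=
    Nat.mul_le_mul (by omega) (by omega)
  refine Nat.le_of_mul_le_mul_right ?_ (show 0 < (b + 1) * (a + 1) by positivity)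
  calc N.choose (b + 1) * (N - 1).choose a * ((b + 1) * (a + 1))
      = N.choose b * (N - 1).choose a * ((N - b) * (a + 1)) := by
        linear_combination (N - 1).choose a * (a + 1) * hN
    _ ≤ N.choose b * (N - 1).choose a * ((N - 1 - a) * (b + 1)) :=
        Nat.mul_le_mul_left _ hratio
    _ = N.choose b * (N - 1).choose (a + 1) * ((b + 1) * (a + 1)) := by
        linear_combination N.choose b * (b + 1) * hN'.symm

theorem tailChoose_eq_one_add {N d : ℕ} (h : d < N) :
    tailChoose N d = 1 + ∑ j ∈ Icc 1 (N - 1 - d), N.choose (d + j) := by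
  rw [tailChoose, show N - d = N - 1 - d + 1 by omega, sum_Icc_succ_top (by omega),
    show d + (N - 1 - d + 1) = N by omega, Nat.choose_self, add_comm]

theorem tailChoose_pos {N d : ℕ} (h : d < N) : 0 < tailChoose N d := by
  rw [tailChoose_eq_one_add h]
  omega

theorem tailChoose_succ_mul_le (N d : ℕ) :
    tailChoose N (d + 1) * (N - 1).choose d ≤ tailChoose N d * (N - 1).choose (d + 1) := by
  simp only [tailChoose, sum_mul]
  calc ∑ j ∈ Icc 1 (N - (d + 1)), N.choose (d + 1 + j) * (N - 1).choose d
      ≤ ∑ j ∈ Icc 1 (N - (d + 1)), N.choose (d + j) * (N - 1).choose (d + 1) := by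
        refine sum_le_sum fun j hj => ?_
        rw [add_right_comm]
        exact Nat.choose_succ_mul_choose_le (by simp only [mem_Icc] at hj; omega)
    _ ≤ ∑ j ∈ Icc 1 (N - d), N.choose (d + j) * (N - 1).choose (d + 1) :=
        sum_le_sum_of_subset (Icc_subset_Icc_right (by omega))

theorem hittingTimeH_succ_sub {N d : ℕ} (h : d < N) :
    hittingTimeH N (d + 1) - hittingTimeH N d = tailChoose N d / (N - 1).choose d := by
  rw [hittingTimeH, hittingTimeH, sum_range_succ, add_sub_cancel_left, tailChoose_eq_one_add h]
  push_cast
  rfl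

theorem hittingTimeH_succ_sub_pos {N d : ℕ} (h : d < N) :
    0 < hittingTimeH N (d + 1) - hittingTimeH N d := by
  rw [hittingTimeH_succ_sub h]
  have := tailChoose_pos h
  have := Nat.choose_pos (show d ≤ N - 1 by omega)
  positivity

theorem hittingTimeH_succ_succ_sub_le {N d : ℕ} (h : d + 2 ≤ N) :
    hittingTimeH N (d + 2) - hittingTimeH N (d + 1) ≤
      hittingTimeH N (d + 1) - hittingTimeH N d := by
  have hpos {k : ℕ} (hk : k ≤ N - 1) : (0 : ℝ) < (N - 1).choose k :=
    mod_cast Nat.choose_pos hk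
  rw [hittingTimeH_succ_sub (by omega : d + 1 < N), hittingTimeH_succ_sub (by omega : d < N),
    div_le_div_iff₀ (hpos (by omega)) (hpos (by omega))]
  exact_mod_cast tailChoose_succ_mul_le N d

/-- The hitting-time function is increasing and concave:
for `1 ≤ d ≤ N-1`, `H(d) - H(d-1) ≥ H(d+1) - H(d) > 0`. -/
theorem stmt_6 (N : ℕ) (d : ℕ) (hd : 1 ≤ d) (hdN : d ≤ N - 1) :
    hittingTimeH N d - hittingTimeH N (d - 1) ≥
      hittingTimeH N (d + 1) - hittingTimeH N d ∧
    0 < hittingTimeH N (d + 1) - hittingTimeH N d := by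
  obtain ⟨m, rfl⟩ : ∃ m, d = m + 1 := ⟨d - 1, by omega⟩
  exact ⟨hittingTimeH_succ_succ_sub_le (by omega), hittingTimeH_succ_sub_pos (by omega)⟩
end

section
/- For fixed k with 1 ≤ k ≤ N, define two binary strings of length N to be adjacent if one is obtained from the other by flipping a block of k consecutive bits (a contiguous window of length k). The resulting graph on {0,1}^N has exactly 2^{k-1} connected components, each with 2^{N-(k-1)} vertices, and each component is isomorphic to the hypercube H_{N-(k-1)}. -/
/-- The hypercube graph on `{0,1}^n`: adjacency is Hamming distance 1. -/
def hypercubeGraph (n : ℕ) : SimpleGraph (Fin n → Bool) :=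
  SimpleGraph.fromRel (fun x y => hammingDist x y = 1)

/-- Flip the contiguous window of `k` bits starting at position `i` (0-based). -/
def blockFlip (N : ℕ) (x : Fin N → Bool) (i k : ℕ) : Fin N → Bool :=
  fun j => if i ≤ (j : ℕ) ∧ (j : ℕ) < i + k then !(x j) else x j

/-- The graph on `{0,1}^N` whose edges flip a block of `k` consecutive bits. -/
def blockFlipGraph (N k : ℕ) : SimpleGraph (Fin N → Bool) :=
  SimpleGraph.fromRel (fun x y => ∃ i : ℕ, i + k ≤ N ∧ y = blockFlip N x i k)


def padStr (N : ℕ) (x : Fin N → Bool) : ℕ → Bool :=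
  fun i => if h : i < N then x ⟨i, h⟩ else false

def bseq (k : ℕ) (X : ℕ → Bool) : ℕ → Bool
  | i => if k ≤ i ∧ 1 ≤ k then xor (X i) (bseq k X (i - k)) else X i
  termination_by i => i
  decreasing_by omega

lemma bseq_def (k : ℕ) (X : ℕ → Bool) (i : ℕ) :
    bseq k X i = if k ≤ i ∧ 1 ≤ k then xor (X i) (bseq k X (i - k)) else X i := by
  rw [bseq]


lemma xor4 (a b c d : Bool) : xor (xor a b) (xor c d) = xor (xor a c) (xor b d) := by
  cases a <;> cases b <;> cases c <;> cases d <;> rfl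

lemma padStr_blockFlip (N k u : ℕ) (x : Fin N → Bool) (i : ℕ) (hi : i < N) :
    padStr N (blockFlip N x u k) i = xor (padStr N x i) (decide (u ≤ i ∧ i < u + k)) := by
  simp only [padStr, dif_pos hi, blockFlip]
  by_cases hc : u ≤ i ∧ i < u + k <;> simp [hc]

lemma bseq_blockFlip (N k u : ℕ) (hk : 1 ≤ k) (hu : u + k ≤ N) (x : Fin N → Bool) :
    ∀ i, i < N → bseq k (padStr N (blockFlip N x u k)) i
      = xor (bseq k (padStr N x) i) (decide (u ≤ i)) := by
  intro i
  induction i using Nat.strong_induction_on with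
  | _ i IH =>
    intro hi
    rw [bseq_def k (padStr N (blockFlip N x u k)) i, bseq_def k (padStr N x) i]
    by_cases hcase : k ≤ i ∧ 1 ≤ k
    · rw [if_pos hcase, if_pos hcase, padStr_blockFlip N k u x i hi,
        IH (i - k) (by omega) (by omega), xor4]
      congr 1
      by_cases h1 : u ≤ i - k
      · have h2 : ¬(u ≤ i ∧ i < u + k) := by omega
        have h3 : u ≤ i := by omega
        simp [h1, h2, h3] <;> omega
      · by_cases h3 : u ≤ i
        · have h2 : u ≤ i ∧ i < u + k := by omega
          simp [h1, h2, h3] <;> omega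
        · have h2 : ¬(u ≤ i ∧ i < u + k) := by omega
          simp [h1, h2, h3] <;> omega
    · rw [if_neg hcase, if_neg hcase, padStr_blockFlip N k u x i hi]
      have : (u ≤ i ∧ i < u + k) ↔ u ≤ i := by omega
      simp [this]

def cseq (N k : ℕ) (X : ℕ → Bool) (i : ℕ) : Bool :=
  xor (bseq k X i) (if i + 1 < N then bseq k X (i + 1) else false)

lemma cseq_blockFlip (N k u : ℕ) (hk : 1 ≤ k) (hu : u + k ≤ N) (x : Fin N → Bool)
    (i : ℕ) (hi : i + 1 < N) :
    cseq N k (padStr N (blockFlip N x u k)) i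
      = xor (cseq N k (padStr N x) i) (decide (i + 1 = u)) := by
  unfold cseq
  rw [if_pos hi, if_pos hi, bseq_blockFlip N k u hk hu x i (by omega),
    bseq_blockFlip N k u hk hu x (i+1) hi, xor4]
  congr 1
  by_cases h1 : u ≤ i
  · have h2 : u ≤ i + 1 := by omega
    have h3 : ¬(i + 1 = u) := by omega
    simp [h1, h2, h3]
  · by_cases h2 : u ≤ i + 1
    · have h3 : i + 1 = u := by omega
      simp [h1, h2, h3]
    · have h3 : ¬(i + 1 = u) := by omega
      simp [h1, h2, h3]

def phiFst (N k : ℕ) (x : Fin N → Bool) : Fin (k-1) → Bool :=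
  fun r => cseq N k (padStr N x) (N - k + r)

def phiSnd (N k : ℕ) (x : Fin N → Bool) : Fin (N - (k-1)) → Bool :=
  fun v => if v.val = 0 then
      xor (bseq k (padStr N x) (N-1)) (xor (bseq k (padStr N x) 0) (bseq k (padStr N x) (N-k)))
    else cseq N k (padStr N x) (v.val - 1)

lemma phiFst_blockFlip (N k u : ℕ) (hk : 1 ≤ k) (hkN : k ≤ N) (hu : u + k ≤ N)
    (x : Fin N → Bool) : phiFst N k (blockFlip N x u k) = phiFst N k x := by
  funext r
  have hr := r.isLt
  unfold phiFst
  rw [cseq_blockFlip N k u hk hu x _ (by omega)]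
  have : ¬(N - k + r.val + 1 = u) := by omega
  simp [this]

lemma phiSnd_blockFlip (N k u : ℕ) (hk : 1 ≤ k) (hkN : k ≤ N) (hu : u + k ≤ N)
    (x : Fin N → Bool) (v : Fin (N - (k-1))) :
    phiSnd N k (blockFlip N x u k) v = xor (phiSnd N k x v) (decide (v.val = u)) := by
  have hv := v.isLt
  unfold phiSnd
  by_cases h0 : v.val = 0
  · rw [if_pos h0, if_pos h0,
      bseq_blockFlip N k u hk hu x (N-1) (by omega),
      bseq_blockFlip N k u hk hu x 0 (by omega),
      bseq_blockFlip N k u hk hu x (N-k) (by omega)]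
    have e1 : u ≤ N - 1 := by omega
    have e2 : u ≤ N - k := by omega
    by_cases h3 : u = 0
    · simp [e1, e2, h3, h0]
    · have : ¬ (u ≤ 0) := by omega
      have h4 : ¬ (v.val = u) := by omega
      simp [e1, e2, this, h4]
  · rw [if_neg h0, if_neg h0, cseq_blockFlip N k u hk hu x _ (by omega)]
    have : (v.val - 1 + 1 = u) ↔ (v.val = u) := by omega
    simp [this]

lemma phi_injective (N k : ℕ) (hk : 1 ≤ k) (hkN : k ≤ N) :
    Function.Injective (fun x : Fin N → Bool => (phiFst N k x, phiSnd N k x)) := by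
  intro x y h
  simp only [Prod.mk.injEq] at h
  obtain ⟨h1, h2⟩ := h
  set B := bseq k (padStr N x) with hB
  set B' := bseq k (padStr N y) with hB'
  -- Step A : cseq agree below N-1
  have hc : ∀ i, i + 1 < N → cseq N k (padStr N x) i = cseq N k (padStr N y) i := by
    intro i hi
    by_cases hsmall : i < N - k
    · have hv : i + 1 < N - (k-1) := by omega
      have := congrFun h2 ⟨i+1, hv⟩
      simpa [phiSnd] using this
    · have hr : i - (N-k) < k - 1 := by omega
      have := congrFun h1 ⟨i - (N-k), hr⟩
      have hidx : N - k + (i - (N-k)) = i := by omega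
      simpa [phiFst, hidx] using this
  -- Step B : downward telescoping
  have key : ∀ a b c d : Bool, xor a b = xor c d → xor a c = xor b d := by decide
  have hb : ∀ j, j ≤ N - 1 → xor (B (N-1-j)) (B' (N-1-j)) = xor (B (N-1)) (B' (N-1)) := by
    intro j
    induction j with
    | zero => intro _; rfl
    | succ j IH =>
      intro hj
      have hj' : j ≤ N - 1 := by omega
      have hi : (N-1-(j+1)) + 1 < N := by omega
      have hstep : N - 1 - (j+1) + 1 = N - 1 - j := by omega
      have hcs := hc (N-1-(j+1)) hi
      unfold cseq at hcs
      have hlt : N - 1 - j < N := by omega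
      rw [hstep, if_pos hlt, if_pos hlt] at hcs
      rw [← hB, ← hB'] at hcs
      have := key _ _ _ _ hcs
      rw [this, IH hj']
  have hb' : ∀ i, i < N → xor (B i) (B' i) = xor (B (N-1)) (B' (N-1)) := by
    intro i hi
    have := hb (N-1-i) (by omega)
    rwa [show N-1-(N-1-i) = i by omega] at this
  -- Step C : delta = false
  have h0 : (0 : ℕ) < N - (k-1) := by omega
  have hv0 : xor (B (N-1)) (xor (B 0) (B (N-k))) = xor (B' (N-1)) (xor (B' 0) (B' (N-k))) := by
    simpa [phiSnd, hB, hB'] using congrFun h2 ⟨0, h0⟩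
  have e1 := hb' (N-1) (by omega)
  have e2 := hb' 0 (by omega)
  have e3 := hb' (N-k) (by omega)
  have hdelta : xor (B (N-1)) (B' (N-1)) = false := by
    revert hv0 e1 e2 e3
    generalize B (N-1) = a1; generalize B' (N-1) = a2
    generalize B 0 = b1; generalize B' 0 = b2
    generalize B (N-k) = c1; generalize B' (N-k) = c2
    cases a1 <;> cases a2 <;> cases b1 <;> cases b2 <;> cases c1 <;> cases c2 <;> decide
  have hBeq : ∀ i, i < N → B i = B' i := by
    intro i hi
    have := hb' i hi
    rw [hdelta] at this
    revert this
    generalize B i = a; generalize B' i = b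
    cases a <;> cases b <;> decide
  -- Step D : recover x = y
  funext j
  have hj := j.isLt
  have hx : padStr N x j.val = x j := by simp [padStr, hj]
  have hy : padStr N y j.val = y j := by simp [padStr, hj]
  have dx := bseq_def k (padStr N x) j.val
  have dy := bseq_def k (padStr N y) j.val
  rw [← hB] at dx; rw [← hB'] at dy
  by_cases hcase : k ≤ j.val ∧ 1 ≤ k
  · rw [if_pos hcase] at dx dy
    have e1 := hBeq j.val hj
    have e2 := hBeq (j.val - k) (by omega)
    rw [← hx, ← hy]
    revert dx dy e1 e2
    generalize B j.val = a; generalize B' j.val = a'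
    generalize B (j.val - k) = b; generalize B' (j.val - k) = b'
    generalize padStr N x j.val = p; generalize padStr N y j.val = q
    cases a <;> cases a' <;> cases b <;> cases b' <;> cases p <;> cases q <;> decide
  · rw [if_neg hcase] at dx dy
    have e1 := hBeq j.val hj
    rw [← hx, ← hy, ← dx, ← dy]
    exact e1


lemma hammingDist_eq_one {n : ℕ} (s t : Fin n → Bool) :
    hammingDist s t = 1 ↔ ∃ v, s v ≠ t v ∧ ∀ w, w ≠ v → s w = t w := by
  unfold hammingDist
  rw [Finset.card_eq_one]
  constructor
  · rintro ⟨v, hv⟩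
    refine ⟨v, ?_, ?_⟩
    · have : v ∈ ({v} : Finset (Fin n)) := Finset.mem_singleton_self v
      rw [← hv] at this
      simpa using this
    · intro w hw
      by_contra hc
      have : w ∈ Finset.filter (fun i => s i ≠ t i) Finset.univ := by simpa using hc
      rw [hv] at this
      simp at this
      exact hw this
  · rintro ⟨v, hv, hw⟩
    refine ⟨v, ?_⟩
    ext w
    simp only [Finset.mem_filter, Finset.mem_univ, true_and, Finset.mem_singleton]
    constructor
    · intro h
      by_contra hc
      exact h (hw w hc)
    · intro h; subst h; exact hv

lemma phi_adj_iff (N k : ℕ) (hk : 1 ≤ k) (hkN : k ≤ N) (x y : Fin N → Bool) :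
    (blockFlipGraph N k).Adj x y ↔
      phiFst N k x = phiFst N k y ∧ hammingDist (phiSnd N k x) (phiSnd N k y) = 1 := by
  rw [blockFlipGraph, SimpleGraph.fromRel_adj]
  constructor
  · rintro ⟨hne, (⟨u, hu, rfl⟩ | ⟨u, hu, rfl⟩)⟩
    · refine ⟨(phiFst_blockFlip N k u hk hkN hu x).symm, ?_⟩
      rw [hammingDist_eq_one]
      refine ⟨⟨u, by omega⟩, ?_, ?_⟩
      · rw [phiSnd_blockFlip N k u hk hkN hu x]
        simp
      · intro w hw
        rw [phiSnd_blockFlip N k u hk hkN hu x]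
        have : ¬ (w.val = u) := fun hc => hw (Fin.ext hc)
        simp [this]
    · refine ⟨phiFst_blockFlip N k u hk hkN hu y, ?_⟩
      rw [hammingDist_eq_one]
      refine ⟨⟨u, by omega⟩, ?_, ?_⟩
      · rw [phiSnd_blockFlip N k u hk hkN hu y]
        simp
      · intro w hw
        rw [phiSnd_blockFlip N k u hk hkN hu y]
        have : ¬ (w.val = u) := fun hc => hw (Fin.ext hc)
        simp [this]
  · rintro ⟨hf, hd⟩
    rw [hammingDist_eq_one] at hd
    obtain ⟨v, hv, hw⟩ := hd
    have hu : v.val + k ≤ N := by have := v.isLt; omega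
    have hzy : blockFlip N x v.val k = y := by
      apply phi_injective N k hk hkN
      simp only [Prod.mk.injEq]
      constructor
      · rw [phiFst_blockFlip N k v.val hk hkN hu x, hf]
      · funext w
        rw [phiSnd_blockFlip N k v.val hk hkN hu x]
        by_cases hwv : w = v
        · subst hwv
          simp only [decide_true, Bool.xor_true]
          revert hv
          cases phiSnd N k x w <;> cases phiSnd N k y w <;> decide
        · have : ¬ (w.val = v.val) := fun hc => hwv (Fin.ext hc)
          simp [this, hw w hwv]
    have hne : x ≠ y := by
      intro hc
      exact hv (by rw [hc])
    exact ⟨hne, Or.inl ⟨v.val, hu, hzy.symm⟩⟩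

lemma phi_reach_of (N k : ℕ) (hk : 1 ≤ k) (hkN : k ≤ N) :
    ∀ n (x y : Fin N → Bool), hammingDist (phiSnd N k x) (phiSnd N k y) = n →
      phiFst N k x = phiFst N k y → (blockFlipGraph N k).Reachable x y := by
  intro n
  induction n using Nat.strong_induction_on with
  | _ n IH =>
    intro x y hd hf
    rcases Nat.eq_zero_or_pos n with hn | hn
    · subst hn
      have : phiSnd N k x = phiSnd N k y := hammingDist_eq_zero.mp hd
      have hxy : x = y := phi_injective N k hk hkN (by simp [this, hf])
      subst hxy; rfl
    · have hne : Finset.filter (fun i => phiSnd N k x i ≠ phiSnd N k y i) Finset.univ ≠ ∅ := by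
        intro hc
        unfold hammingDist at hd
        rw [show ({i | phiSnd N k x i ≠ phiSnd N k y i} : Finset _) = Finset.filter (fun i => phiSnd N k x i ≠ phiSnd N k y i) Finset.univ from rfl, hc] at hd
        simp at hd; omega
      obtain ⟨v, hv⟩ := Finset.nonempty_of_ne_empty hne
      have hv' : phiSnd N k x v ≠ phiSnd N k y v := by simpa using hv
      have hu : v.val + k ≤ N := by have := v.isLt; omega
      set z := blockFlip N x v.val k with hz
      have hsz : ∀ w, phiSnd N k z w = xor (phiSnd N k x w) (decide (w.val = v.val)) :=
        fun w => phiSnd_blockFlip N k v.val hk hkN hu x w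
      have hfz : phiFst N k z = phiFst N k x := phiFst_blockFlip N k v.val hk hkN hu x
      have hadj : (blockFlipGraph N k).Adj x z := by
        refine ⟨?_, Or.inl ⟨v.val, hu, rfl⟩⟩
        intro hc
        have := hsz v
        rw [← hc] at this
        simp at this
      -- the disagreement set shrinks
      have hfilter : Finset.filter (fun i => phiSnd N k z i ≠ phiSnd N k y i) Finset.univ
          = (Finset.filter (fun i => phiSnd N k x i ≠ phiSnd N k y i) Finset.univ).erase v := by
        ext w
        simp only [Finset.mem_filter, Finset.mem_univ, true_and, Finset.mem_erase]
        by_cases hwv : w = v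
        · subst hwv
          rw [hsz w]
          simp only [decide_true, Bool.xor_true]
          constructor
          · intro h
            exfalso
            apply h
            revert hv'
            cases phiSnd N k x w <;> cases phiSnd N k y w <;> decide
          · rintro ⟨h, _⟩; exact absurd rfl h
        · have hval : ¬ (w.val = v.val) := fun hc => hwv (Fin.ext hc)
          rw [hsz w]
          simp [hval, hwv]
      have hcard : hammingDist (phiSnd N k z) (phiSnd N k y) = n - 1 := by
        unfold hammingDist
        rw [show ({i | phiSnd N k z i ≠ phiSnd N k y i} : Finset _) = Finset.filter (fun i => phiSnd N k z i ≠ phiSnd N k y i) Finset.univ from rfl, hfilter, Finset.card_erase_of_mem hv]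
        unfold hammingDist at hd
        rw [show ({i | phiSnd N k x i ≠ phiSnd N k y i} : Finset _) = Finset.filter (fun i => phiSnd N k x i ≠ phiSnd N k y i) Finset.univ from rfl] at hd
        omega
      have hreach := IH (n-1) (by omega) z y hcard (by rw [hfz, hf])
      exact hadj.reachable.trans hreach

lemma phi_reachable_iff (N k : ℕ) (hk : 1 ≤ k) (hkN : k ≤ N) (x y : Fin N → Bool) :
    (blockFlipGraph N k).Reachable x y ↔ phiFst N k x = phiFst N k y := by
  constructor
  · intro h
    obtain ⟨w⟩ := h
    induction w with
    | nil => rfl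
    | cons a p ih =>
      exact ((phi_adj_iff N k hk hkN _ _).mp a).1.trans ih
  · intro h
    exact phi_reach_of N k hk hkN _ x y rfl h


lemma hypercube_adj {n : ℕ} (s t : Fin n → Bool) :
    (hypercubeGraph n).Adj s t ↔ hammingDist s t = 1 := by
  rw [hypercubeGraph, SimpleGraph.fromRel_adj]
  constructor
  · rintro ⟨hne, h | h⟩
    · exact h
    · rwa [hammingDist_comm]
  · intro h
    refine ⟨?_, Or.inl h⟩
    intro hc
    subst hc
    rw [hammingDist_self] at h
    exact one_ne_zero h.symm

lemma phi_bijective (N k : ℕ) (hk : 1 ≤ k) (hkN : k ≤ N) :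
    Function.Bijective (fun x : Fin N → Bool => (phiFst N k x, phiSnd N k x)) := by
  rw [Fintype.bijective_iff_injective_and_card]
  refine ⟨phi_injective N k hk hkN, ?_⟩
  simp only [Fintype.card_prod, Fintype.card_fun, Fintype.card_bool, Fintype.card_fin, ← pow_add]
  congr 1
  omega

/-- For `1 ≤ k ≤ N`, the block-flip graph has exactly `2^(k-1)` connected
components, each with `2^(N-(k-1))` vertices, and each component (as an induced
subgraph) is isomorphic to the hypercube `H_{N-(k-1)}`. -/
theorem stmt_8 (N k : ℕ) (hk : 1 ≤ k) (hkN : k ≤ N) :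
    Nat.card (blockFlipGraph N k).ConnectedComponent = 2 ^ (k - 1) ∧
    (∀ c : (blockFlipGraph N k).ConnectedComponent,
      Nat.card c.supp = 2 ^ (N - (k - 1))) ∧
    (∀ c : (blockFlipGraph N k).ConnectedComponent,
      Nonempty (((blockFlipGraph N k).induce c.supp) ≃g hypercubeGraph (N - (k - 1)))) := by
  set Φ := Equiv.ofBijective _ (phi_bijective N k hk hkN) with hΦ
  have hfst : ∀ (p : (Fin (k-1) → Bool) × (Fin (N-(k-1)) → Bool)), phiFst N k (Φ.symm p) = p.1 :=
    fun p => congrArg Prod.fst (Φ.apply_symm_apply p)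
  have hsnd : ∀ (p : (Fin (k-1) → Bool) × (Fin (N-(k-1)) → Bool)), phiSnd N k (Φ.symm p) = p.2 :=
    fun p => congrArg Prod.snd (Φ.apply_symm_apply p)
  refine ⟨?_, ?_, ?_⟩
  · -- component count
    have e : (blockFlipGraph N k).ConnectedComponent ≃ (Fin (k-1) → Bool) := by
      refine ⟨SimpleGraph.ConnectedComponent.lift (phiFst N k)
        (fun v w p _ => (phi_reachable_iff N k hk hkN v w).mp ⟨p⟩),
        fun a => SimpleGraph.connectedComponentMk _ (Φ.symm (a, fun _ => false)), ?_, ?_⟩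
      · intro c
        induction c using SimpleGraph.ConnectedComponent.ind with
        | _ v =>
          rw [SimpleGraph.ConnectedComponent.lift_mk, SimpleGraph.ConnectedComponent.eq,
            phi_reachable_iff N k hk hkN]
          exact hfst _
      · intro a
        rw [SimpleGraph.ConnectedComponent.lift_mk]
        exact hfst _
    rw [Nat.card_congr e]
    simp [Nat.card_eq_fintype_card]
  · -- supp cardinality
    intro c
    induction c using SimpleGraph.ConnectedComponent.ind with
    | _ v =>
      have e2 : ((blockFlipGraph N k).connectedComponentMk v).supp ≃ (Fin (N-(k-1)) → Bool) := by
        refine ⟨fun p => phiSnd N k p.1,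
          fun t => ⟨Φ.symm (phiFst N k v, t), ?_⟩, ?_, ?_⟩
        · rw [SimpleGraph.ConnectedComponent.mem_supp_iff, SimpleGraph.ConnectedComponent.eq,
            phi_reachable_iff N k hk hkN]
          exact hfst _
        · rintro ⟨x, hx⟩
          rw [SimpleGraph.ConnectedComponent.mem_supp_iff, SimpleGraph.ConnectedComponent.eq,
            phi_reachable_iff N k hk hkN] at hx
          apply Subtype.ext
          show Φ.symm (phiFst N k v, phiSnd N k x) = x
          rw [← hx]
          exact Φ.symm_apply_apply x
        · intro t
          exact hsnd _
      rw [Nat.card_congr e2]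
      simp [Nat.card_eq_fintype_card]
  · -- induced subgraph iso
    intro c
    induction c using SimpleGraph.ConnectedComponent.ind with
    | _ v =>
      refine ⟨⟨⟨fun p => phiSnd N k p.1,
        fun t => ⟨Φ.symm (phiFst N k v, t), ?_⟩, ?_, ?_⟩, ?_⟩⟩
      · rw [SimpleGraph.ConnectedComponent.mem_supp_iff, SimpleGraph.ConnectedComponent.eq,
          phi_reachable_iff N k hk hkN]
        exact hfst _
      · rintro ⟨x, hx⟩
        have h := hx
        rw [SimpleGraph.ConnectedComponent.mem_supp_iff, SimpleGraph.ConnectedComponent.eq,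
          phi_reachable_iff N k hk hkN] at h
        apply Subtype.ext
        show Φ.symm (phiFst N k v, phiSnd N k x) = x
        rw [← h]
        exact Φ.symm_apply_apply x
      · intro t
        exact hsnd _
      · rintro ⟨x, hx⟩ ⟨y, hy⟩
        have hx' : phiFst N k x = phiFst N k v := by
          have h := hx
          rw [SimpleGraph.ConnectedComponent.mem_supp_iff, SimpleGraph.ConnectedComponent.eq,
            phi_reachable_iff N k hk hkN] at h
          exact h
        have hy' : phiFst N k y = phiFst N k v := by
          have h := hy
          rw [SimpleGraph.ConnectedComponent.mem_supp_iff, SimpleGraph.ConnectedComponent.eq,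
            phi_reachable_iff N k hk hkN] at h
          exact h
        show (hypercubeGraph _).Adj (phiSnd N k x) (phiSnd N k y) ↔ _
        rw [hypercube_adj, SimpleGraph.comap_adj, phi_adj_iff N k hk hkN]
        constructor
        · intro h
          exact ⟨hx'.trans hy'.symm, h⟩
        · exact And.right
end

section
/- For every k ≥ 2 and N ≥ 3, the second largest eigenvalue λ_2^{(k)} = ((N-2)/(2k))·(1 - (1 - 2/N)^k) of P^{(k)} is strictly smaller than the second largest eigenvalue λ_2 = 1 - 2/N of P; more precisely λ_2 - λ_2^{(k)} ≥ (N-2)/N^2 > 0. -/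
/-- Key inequality: for `0 ≤ x ≤ 1` and `k ≥ 2`, `2(1 - x^k) ≤ k(1 - x²)`. -/
lemma aux_geom_bound (x : ℝ) (hx0 : 0 ≤ x) (hx1 : x ≤ 1) :
    ∀ k : ℕ, 2 ≤ k → 2 * (1 - x ^ k) ≤ k * (1 - x ^ 2) := by
  intro k hk
  induction k, hk using Nat.le_induction with
  | base => norm_num
  | succ n hn ih =>
    have hxn : x ^ n ≤ x := by
      calc x ^ n ≤ x ^ 1 := pow_le_pow_of_le_one hx0 hx1 (by omega)
      _ = x := pow_one x
    have h1 : x ^ (n + 1) = x ^ n * x := pow_succ x n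
    push_cast
    nlinarith [pow_nonneg hx0 n]

/-- For `k ≥ 2` and `N ≥ 3`, the second largest eigenvalue
`λ₂^{(k)} = ((N-2)/(2k))·(1 - (1 - 2/N)^k)` of `P^{(k)}` is strictly smaller
than `λ₂ = 1 - 2/N`; more precisely `λ₂ - λ₂^{(k)} ≥ (N-2)/N² > 0`. -/
theorem stmt_13 (N k : ℕ) (hk : 2 ≤ k) (hN : 3 ≤ N) :
    (1 - 2 / (N : ℝ)) - ((N : ℝ) - 2) / (2 * k) * (1 - (1 - 2 / (N : ℝ)) ^ k)
      ≥ ((N : ℝ) - 2) / (N : ℝ) ^ 2 ∧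
    (0 : ℝ) < ((N : ℝ) - 2) / (N : ℝ) ^ 2 := by
  have hN3 : (3 : ℝ) ≤ N := by exact_mod_cast hN
  have hk2 : (2 : ℝ) ≤ k := by exact_mod_cast hk
  have hN0 : (0 : ℝ) < N := by linarith
  have hk0 : (0 : ℝ) < k := by linarith
  have hx0 : (0 : ℝ) ≤ 1 - 2 / N := by
    have : 2 / (N : ℝ) ≤ 1 := by
      rw [div_le_one hN0]; linarith
    linarith
  have hx1 : (1 : ℝ) - 2 / N ≤ 1 := by
    have : 0 < 2 / (N : ℝ) := by positivity
    linarith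
  have key := aux_geom_bound (1 - 2 / N) hx0 hx1 k hk
  constructor
  · have hc : (0 : ℝ) < ((N : ℝ) - 2) / (2 * k) := by
      apply div_pos <;> linarith
    have h1 : ((N : ℝ) - 2) / (2 * k) * (1 - (1 - 2 / (N : ℝ)) ^ k)
        ≤ ((N : ℝ) - 2) / (2 * k) * ((k : ℝ) * (1 - (1 - 2 / N) ^ 2) / 2) := by
      apply mul_le_mul_of_nonneg_left _ hc.le
      linarith
    have h2 : ((N : ℝ) - 2) / (2 * k) * ((k : ℝ) * (1 - (1 - 2 / N) ^ 2) / 2)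
        = (1 - 2 / N) - ((N : ℝ) - 2) / (N : ℝ) ^ 2 := by
      field_simp
      ring
    linarith
  · apply div_pos <;> nlinarith
end

section
/- In the N-dimensional hypercube, for every 1 ≤ i ≤ N, the minimum over all pairs (j, l) of vertices of the nonzero entries of the i-th power of the adjacency matrix A_N equals i!; equivalently, the minimum nonzero entry of P^i (P = A_N/N) is i!/N^i. Moreover, the minimum is attained at pairs of vertices at Hamming distance exactly i, for which the number of walks of length i between them is exactly i! (the number of orderings of the i differing coordinates). -/
/-- The adjacency matrix of the `N`-hypercube over `ℕ` (entries of its powers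
count walks). -/
def hypercubeAdjNat (N : ℕ) : Matrix (Fin N → Bool) (Fin N → Bool) ℕ :=
  fun x y => if hammingDist x y = 1 then 1 else 0

/-- Transition matrix `P = A_N / N` of the simple random walk. -/
noncomputable def hypercubePmat (N : ℕ) : Matrix (Fin N → Bool) (Fin N → Bool) ℝ :=
  fun x y => if hammingDist x y = 1 then 1 / N else 0


open Finset Matrix

variable {N : ℕ}

def flipv (x : Fin N → Bool) (k : Fin N) : Fin N → Bool := Function.update x k (!(x k))

lemma hd_def (x y : Fin N → Bool) :
    hammingDist x y = (Finset.univ.filter fun j => x j ≠ y j).card := rfl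

lemma flipv_apply (x : Fin N → Bool) (k j : Fin N) :
    flipv x k j = if j = k then !(x k) else x j := Function.update_apply x k (!(x k)) j

lemma hd_flip_eq {x y : Fin N → Bool} {k : Fin N} (h : x k = y k) :
    hammingDist (flipv x k) y = hammingDist x y + 1 := by
  rw [hd_def, hd_def]
  have hset : (Finset.univ.filter fun j => flipv x k j ≠ y j)
      = insert k (Finset.univ.filter fun j => x j ≠ y j) := by
    ext j
    by_cases hj : j = k
    · subst hj
      simp [flipv_apply, h]
    · simp [flipv_apply, hj]
  rw [hset, Finset.card_insert_of_notMem (by simp [h])]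

lemma hd_flip_ne {x y : Fin N → Bool} {k : Fin N} (h : x k ≠ y k) :
    hammingDist x y = hammingDist (flipv x k) y + 1 := by
  have h' : flipv x k k = y k := by
    simp only [flipv_apply, if_pos rfl]
    cases hx : x k <;> cases hy : y k <;> simp_all
  have : x = flipv (flipv x k) k := by
    ext j
    by_cases hj : j = k
    · subst hj; simp [flipv_apply]
    · simp [flipv_apply, hj]
  conv_lhs => rw [this]
  exact hd_flip_eq h'

lemma hd_self_flip (x : Fin N → Bool) (k : Fin N) : hammingDist x (flipv x k) = 1 := by
  rw [hd_def]
  have : (Finset.univ.filter fun j => x j ≠ flipv x k j) = {k} := by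
    ext j
    by_cases hj : j = k
    · subst hj; simp [flipv_apply]
    · simp [flipv_apply, hj]
  rw [this, Finset.card_singleton]

lemma flipv_inj (x : Fin N → Bool) : Function.Injective (flipv x) := by
  intro k k' h
  by_contra hkk
  have := congrFun h k
  rw [flipv_apply, flipv_apply, if_pos rfl, if_neg hkk] at this
  cases x k <;> simp_all

lemma eq_flipv_of_hd_one {x z : Fin N → Bool} (h : hammingDist x z = 1) :
    ∃ k, z = flipv x k := by
  rw [hd_def, Finset.card_eq_one] at h
  obtain ⟨k, hk⟩ := h
  refine ⟨k, ?_⟩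
  ext j
  by_cases hj : j = k
  · subst hj
    have : x j ≠ z j := by
      have : j ∈ (Finset.univ.filter fun j => x j ≠ z j) := by rw [hk]; simp
      simpa using this
    rw [flipv_apply, if_pos rfl]
    cases hx : x j <;> cases hz : z j <;> simp_all
  · have : j ∉ (Finset.univ.filter fun j => x j ≠ z j) := by rw [hk]; simp [hj]
    simp at this
    simp [flipv_apply, hj, this]

lemma adj_mul_apply (M : Matrix (Fin N → Bool) (Fin N → Bool) ℕ) (x y : Fin N → Bool) :
    (hypercubeAdjNat N * M) x y = ∑ k : Fin N, M (flipv x k) y := by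
  rw [Matrix.mul_apply]
  rw [show (∑ z, hypercubeAdjNat N x z * M z y)
      = ∑ z ∈ Finset.univ.filter (fun z => hammingDist x z = 1), M z y by
    rw [Finset.sum_filter]
    congr 1; ext z
    by_cases h : hammingDist x z = 1 <;> simp [hypercubeAdjNat, h]]
  refine (Finset.sum_bij (fun k _ => flipv x k) ?_ ?_ ?_ ?_).symm
  · intro k _; simp [hd_self_flip]
  · intro k _ k' _ h; exact flipv_inj x h
  · intro z hz
    simp at hz
    obtain ⟨k, hk⟩ := eq_flipv_of_hd_one hz
    exact ⟨k, by simp, hk.symm⟩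
  · intro k _; rfl

lemma key (hN : 1 ≤ N) : ∀ i : ℕ, ∀ x y : Fin N → Bool,
    (((hypercubeAdjNat N) ^ i) x y ≠ 0 →
        hammingDist x y ≤ i ∧ hammingDist x y % 2 = i % 2) ∧
    (hammingDist x y ≤ i → hammingDist x y % 2 = i % 2 →
        ((hypercubeAdjNat N) ^ i) x y ≠ 0) ∧
    (hammingDist x y = i → ((hypercubeAdjNat N) ^ i) x y = i.factorial) ∧
    (((hypercubeAdjNat N) ^ i) x y ≠ 0 → i ≤ N →
        i.factorial ≤ ((hypercubeAdjNat N) ^ i) x y) := by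
  intro i
  induction i with
  | zero =>
    intro x y
    simp only [pow_zero, Matrix.one_apply, Nat.factorial_zero]
    by_cases h : x = y
    · subst h; simp [hammingDist_self]
    · have hd : hammingDist x y ≠ 0 := fun hh => h (hammingDist_eq_zero.mp hh)
      refine ⟨?_, ?_, ?_, ?_⟩ <;> simp [h] <;> try omega
  | succ i ih =>
    intro x y
    have hrw : ∀ u v : Fin N → Bool, ((hypercubeAdjNat N) ^ (i+1)) u v
        = ∑ k : Fin N, ((hypercubeAdjNat N) ^ i) (flipv u k) v := by
      intro u v
      rw [pow_succ', adj_mul_apply]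
    -- part (a)
    have ha : ((hypercubeAdjNat N) ^ (i+1)) x y ≠ 0 →
        hammingDist x y ≤ i + 1 ∧ hammingDist x y % 2 = (i+1) % 2 := by
      intro h
      rw [hrw] at h
      obtain ⟨k, _, hk⟩ := Finset.exists_ne_zero_of_sum_ne_zero h
      obtain ⟨h1, h2⟩ := (ih (flipv x k) y).1 hk
      by_cases hxy : x k = y k
      · rw [hd_flip_eq hxy] at h1 h2
        omega
      · rw [hd_flip_ne hxy]
        omega
    -- part (b)
    have hb : hammingDist x y ≤ i + 1 → hammingDist x y % 2 = (i+1) % 2 →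
        ((hypercubeAdjNat N) ^ (i+1)) x y ≠ 0 := by
      intro h1 h2
      rw [hrw]
      by_cases hd0 : hammingDist x y = 0
      · have hxy : x = y := hammingDist_eq_zero.mp hd0
        have hiodd : i % 2 = 1 := by omega
        set k : Fin N := ⟨0, hN⟩
        have hflip : hammingDist (flipv x k) y = 1 := by
          rw [hd_flip_eq (by rw [hxy])]
          omega
        have hne := (ih (flipv x k) y).2.1 (by omega) (by omega)
        intro hsum
        rw [Finset.sum_eq_zero_iff] at hsum
        exact hne (hsum k (Finset.mem_univ k))
      · have : (Finset.univ.filter fun j => x j ≠ y j).Nonempty := by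
          rw [← Finset.card_pos, ← hd_def]
          omega
        obtain ⟨k, hk⟩ := this
        have hxy : x k ≠ y k := (Finset.mem_filter.mp hk).2
        have hflip := hd_flip_ne hxy
        have hne := (ih (flipv x k) y).2.1 (by omega) (by omega)
        intro hsum
        rw [Finset.sum_eq_zero_iff] at hsum
        exact hne (hsum k (Finset.mem_univ k))
    -- part (c)
    have hc : hammingDist x y = i + 1 →
        ((hypercubeAdjNat N) ^ (i+1)) x y = (i+1).factorial := by
      intro hd
      rw [hrw]
      rw [← Finset.sum_filter_add_sum_filter_not Finset.univ (fun k => x k ≠ y k)]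
      have hS : ∑ k ∈ Finset.univ.filter (fun k => x k ≠ y k),
          ((hypercubeAdjNat N) ^ i) (flipv x k) y
          = (i+1) * i.factorial := by
        rw [Finset.sum_congr rfl (fun k hk => (ih (flipv x k) y).2.2.1 ?_),
            Finset.sum_const, smul_eq_mul, ← hd_def, hd]
        have hxy : x k ≠ y k := (Finset.mem_filter.mp hk).2
        have := hd_flip_ne hxy
        omega
      have hT : ∑ k ∈ Finset.univ.filter (fun k => ¬ x k ≠ y k),
          ((hypercubeAdjNat N) ^ i) (flipv x k) y = 0 := by
        refine Finset.sum_eq_zero fun k hk => ?_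
        have hxy : x k = y k := not_ne_iff.mp (Finset.mem_filter.mp hk).2
        by_contra hne
        have := ((ih (flipv x k) y).1 hne).1
        rw [hd_flip_eq hxy] at this
        omega
      rw [hS, hT, Nat.factorial_succ, add_zero]
    -- part (d)
    have hdd : ((hypercubeAdjNat N) ^ (i+1)) x y ≠ 0 → i + 1 ≤ N →
        (i+1).factorial ≤ ((hypercubeAdjNat N) ^ (i+1)) x y := by
      intro h hiN
      obtain ⟨h1, h2⟩ := ha h
      by_cases hcase : hammingDist x y = i + 1
      · exact le_of_eq (hc hcase).symm
      · have hle : hammingDist x y + 1 ≤ i := by omega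
        rw [hrw]
        have hterm : ∀ k : Fin N, i.factorial ≤ ((hypercubeAdjNat N) ^ i) (flipv x k) y := by
          intro k
          by_cases hxy : x k = y k
          · have hf := hd_flip_eq hxy
            exact (ih (flipv x k) y).2.2.2
              ((ih (flipv x k) y).2.1 (by omega) (by omega)) (by omega)
          · have hf := hd_flip_ne hxy
            exact (ih (flipv x k) y).2.2.2
              ((ih (flipv x k) y).2.1 (by omega) (by omega)) (by omega)
        calc (i+1).factorial = (i+1) * i.factorial := Nat.factorial_succ i
          _ ≤ N * i.factorial := Nat.mul_le_mul_right _ hiN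
          _ = ∑ _k : Fin N, i.factorial := by
              rw [Finset.sum_const, smul_eq_mul, Finset.card_univ, Fintype.card_fin]
          _ ≤ ∑ k : Fin N, ((hypercubeAdjNat N) ^ i) (flipv x k) y :=
              Finset.sum_le_sum fun k _ => hterm k
    exact ⟨ha, hb, hc, hdd⟩

lemma pmat_eq : hypercubePmat N
    = (N : ℝ)⁻¹ • ((Nat.castRingHom ℝ).mapMatrix (hypercubeAdjNat N)) := by
  ext x y
  simp only [hypercubePmat, hypercubeAdjNat, Matrix.smul_apply, RingHom.mapMatrix_apply,
    Matrix.map_apply, smul_eq_mul]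
  by_cases h : hammingDist x y = 1 <;> simp [h, one_div]

lemma pmat_pow (i : ℕ) (x y : Fin N → Bool) :
    ((hypercubePmat N) ^ i) x y = (((hypercubeAdjNat N) ^ i) x y : ℝ) / (N : ℝ) ^ i := by
  rw [pmat_eq, smul_pow, ← map_pow, Matrix.smul_apply, RingHom.mapMatrix_apply,
    Matrix.map_apply]
  rw [smul_eq_mul, inv_pow, eq_comm, div_eq_inv_mul]
  rfl


/-- For `1 ≤ i ≤ N`, the minimum nonzero entry of `A_N^i` equals `i!`:
every nonzero entry is at least `i!`, and entries at pairs of vertices at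
Hamming distance exactly `i` equal `i!`.  Equivalently, every nonzero entry of
`P^i` is at least `i!/N^i`, with equality at distance `i`. -/
theorem stmt_18 (N i : ℕ) (hi1 : 1 ≤ i) (hiN : i ≤ N) :
    (∀ x y : Fin N → Bool, ((hypercubeAdjNat N) ^ i) x y ≠ 0 →
      Nat.factorial i ≤ ((hypercubeAdjNat N) ^ i) x y) ∧
    (∀ x y : Fin N → Bool, hammingDist x y = i →
      ((hypercubeAdjNat N) ^ i) x y = Nat.factorial i) ∧
    (∀ x y : Fin N → Bool, ((hypercubePmat N) ^ i) x y ≠ 0 →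
      (Nat.factorial i : ℝ) / N ^ i ≤ ((hypercubePmat N) ^ i) x y) ∧
    (∀ x y : Fin N → Bool, hammingDist x y = i →
      ((hypercubePmat N) ^ i) x y = (Nat.factorial i : ℝ) / N ^ i) := by
  have hN : 1 ≤ N := le_trans hi1 hiN
  have hNpow : (0 : ℝ) < (N : ℝ) ^ i := by positivity
  refine ⟨fun x y h => (key hN i x y).2.2.2 h hiN,
    fun x y h => (key hN i x y).2.2.1 h, fun x y h => ?_, fun x y h => ?_⟩
  · rw [pmat_pow] at h ⊢
    have hne : ((hypercubeAdjNat N) ^ i) x y ≠ 0 := by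
      intro h0
      rw [h0] at h
      simp at h
    have := (key hN i x y).2.2.2 hne hiN
    exact div_le_div_of_nonneg_right (by exact_mod_cast this) hNpow.le
  · rw [pmat_pow, (key hN i x y).2.2.1 h]
end
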